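/- arXiv:math/0209137 — 3 statements merged into one kernel-verified Lean document; each statement's English description precedes it below -/
import Mathlib

section
/- For finite sets X, Y of integers and any prime p, if every element of X + Y is a prime greater than p, then the number of residue classes mod p occupied by X plus the number occupied by Y is at most p. -/
open Pointwise

theorem stmt_5 (X Y : Finset ℤ) (p : ℕ) (hp : p.Prime)
    (h : ∀ n ∈ X + Y, Prime n ∧ (p : ℤ) < n) :
    (X.image (fun x : ℤ => (x : ZMod p))).card + (Y.image (fun y : ℤ => (y : ZMod p))).card ≤ p := by
  haveI : Fact p.Prime := ⟨hp⟩
  have hcard : ∀ Z : Finset ℤ, (Z.image (fun x : ℤ => (x : ZMod p))).card ≤ p := by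
    intro Z
    calc (Z.image (fun x : ℤ => (x : ZMod p))).card ≤ Fintype.card (ZMod p) :=
          Finset.card_le_univ _
      _ = p := ZMod.card p
  rcases X.eq_empty_or_nonempty with hX | hX
  · simp [hX]; exact hcard Y
  rcases Y.eq_empty_or_nonempty with hY | hY
  · simp [hY]; exact hcard X
  set s := X.image (fun x : ℤ => (x : ZMod p))
  set t := Y.image (fun y : ℤ => (y : ZMod p))
  have hs : s.Nonempty := hX.image _
  have ht : t.Nonempty := hY.image _
  have himg : s + t = (X + Y).image (fun x : ℤ => (x : ZMod p)) := by
    simp only [s, t]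
    ext z
    simp only [Finset.mem_add, Finset.mem_image]
    constructor
    · rintro ⟨a, ⟨x, hx, rfl⟩, b, ⟨y, hy, rfl⟩, rfl⟩
      exact ⟨x + y, ⟨x, hx, y, hy, rfl⟩, by push_cast; ring⟩
    · rintro ⟨n, ⟨x, hx, y, hy, rfl⟩, rfl⟩
      exact ⟨x, ⟨x, hx, rfl⟩, y, ⟨y, hy, rfl⟩, by push_cast; ring⟩
  have h0 : (0 : ZMod p) ∉ s + t := by
    rw [himg]
    simp only [Finset.mem_image]
    rintro ⟨n, hn, hn0⟩
    obtain ⟨hprime, hlt⟩ := h n hn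
    have hpdvd : (p : ℤ) ∣ n := by
      rwa [← ZMod.intCast_zmod_eq_zero_iff_dvd]
    have hassoc := ((Nat.prime_iff_prime_int.mp hp)).associated_of_dvd hprime hpdvd
    rw [Int.associated_iff] at hassoc
    rcases hassoc with h1 | h1 <;> omega
  have hle : (s + t).card ≤ p - 1 := by
    have : (s + t).card < Fintype.card (ZMod p) := by
      apply Finset.card_lt_card
      refine ⟨Finset.subset_univ _, fun hall => h0 (hall (Finset.mem_univ 0))⟩
    rw [ZMod.card] at this
    omega
  have hcd := ZMod.cauchy_davenport hp hs ht
  have hp1 : 1 ≤ p := hp.one_lt.le.trans' (by omega)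
  omega
end

section
/- Let J ⊆ {1,...,x} be a finite set of integers with x ≥ 2, and let U ≤ |J| be a positive real. Then |J|² · log x + |J| · (sum of log p over primes p ≤ U) > the sum over primes p ≤ U of (log p) · (sum over c from 0 to p-1 of |J(c,p)|²), where J(c,p) is the number of elements of J congruent to c mod p. -/
/-!
Both sides count pairs `(j₁, j₂) ∈ J × J` with `j₁ ≡ j₂ mod p`, weighted by `log p`:
`∑_c |J(c,p)|²` is the number of such pairs, so the right-hand side equals
`∑_{(j₁,j₂)} ∑_{p ≤ U, p ∣ j₂ - j₁} log p`. A diagonal pair contributes `∑_{p ≤ U} log p`.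
For an off-diagonal pair the primes involved are distinct divisors of `0 < |j₂ - j₁| < x`,
so their logarithms add up to at most `log x` (compare with `∑_{d ∣ n} Λ d = log n`).
The term `|J|² log x` also covers the `|J|` diagonal pairs, and their share `|J| log x > 0`
makes the inequality strict.
-/

open Finset Real
open ArithmeticFunction (vonMangoldt_apply_prime vonMangoldt_nonneg vonMangoldt_sum)
open scoped ArithmeticFunction.vonMangoldt

theorem sum_log_le_log_of_prime_dvd {P : Finset ℕ} {n : ℕ} (hn : n ≠ 0)
    (hP : ∀ p ∈ P, p.Prime ∧ p ∣ n) : ∑ p ∈ P, log p ≤ log n :=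
  calc ∑ p ∈ P, log p = ∑ p ∈ P, Λ p :=
        sum_congr rfl fun p hp => (vonMangoldt_apply_prime (hP p hp).1).symm
    _ ≤ ∑ d ∈ n.divisors, Λ d :=
        sum_le_sum_of_subset_of_nonneg
          (fun p hp => Nat.mem_divisors.mpr ⟨(hP p hp).2, hn⟩) fun _ _ _ => vonMangoldt_nonneg
    _ = log n := vonMangoldt_sum

theorem sum_log_filter_mod_eq_le {P : Finset ℕ} (hP : ∀ p ∈ P, p.Prime) {a b x : ℕ}
    (hab : a ≠ b) (ha : a ≤ x) (hb : b ≤ x) :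
    ∑ p ∈ P with a % p = b % p, log p ≤ log x := by
  set n := ((b : ℤ) - a).natAbs
  have hn : n ≠ 0 := by omega
  calc ∑ p ∈ P with a % p = b % p, log p ≤ log n := by
        refine sum_log_le_log_of_prime_dvd hn fun p hp => ?_
        obtain ⟨hpP, hmod⟩ := mem_filter.mp hp
        exact ⟨hP p hpP, Int.natCast_dvd.mp (Nat.modEq_iff_dvd.mp hmod)⟩
    _ ≤ log x := log_le_log (by positivity) (by exact_mod_cast (by omega : n ≤ x))

theorem sum_sq_card_fiber_eq_card_filter_product {α β : Type*} [DecidableEq β]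
    {s : Finset α} {t : Finset β} {f : α → β} (hf : Set.MapsTo f s t) :
    ∑ c ∈ t, #{a ∈ s | f a = c} ^ 2 = #{q ∈ s ×ˢ s | f q.1 = f q.2} := by
  rw [card_eq_sum_card_fiberwise (f := fun q => f q.1) (t := t)]
  · refine sum_congr rfl fun c _ => ?_
    rw [sq, ← card_product, filter_filter]
    congr 1
    ext ⟨a, b⟩
    simp only [mem_filter, mem_product]
    constructor
    · rintro ⟨⟨ha, rfl⟩, hb, hbc⟩; exact ⟨⟨ha, hb⟩, hbc.symm, rfl⟩
    · rintro ⟨⟨ha, hb⟩, hab, rfl⟩; exact ⟨⟨ha, rfl⟩, hb, hab.symm⟩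
  · intro q hq
    exact hf (mem_product.mp (mem_filter.mp hq).1).1

theorem sum_mul_card_filter_eq_sum_sum_filter {ι κ : Type*} (P : Finset ι) (S : Finset κ)
    (R : ι → κ → Prop) [∀ i k, Decidable (R i k)] (w : ι → ℝ) :
    ∑ p ∈ P, w p * #{q ∈ S | R p q} = ∑ q ∈ S, ∑ p ∈ P with R p q, w p := by
  simp_rw [mul_comm (w _), ← nsmul_eq_mul, ← sum_const]
  exact sum_comm' fun p q => by simp only [mem_filter]; tauto

theorem sum_log_mul_sum_sq_card_mod_le {P : Finset ℕ} (hP : ∀ p ∈ P, p.Prime)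
    {J : Finset ℕ} {x : ℕ} (hJ : ∀ j ∈ J, j ≤ x) :
    ∑ p ∈ P, log p * ∑ c ∈ range p, (#{j ∈ J | j % p = c} : ℝ) ^ 2
      ≤ #J * ∑ p ∈ P, log p + (#J ^ 2 - #J) * log x := by
  have hpairs : ∀ p ∈ P, ∑ c ∈ range p, (#{j ∈ J | j % p = c} : ℝ) ^ 2
      = #{q ∈ J ×ˢ J | q.1 % p = q.2 % p} := fun p hp => by
    exact_mod_cast sum_sq_card_fiber_eq_card_filter_product
      fun j _ => mem_range.mpr (Nat.mod_lt j (hP p hp).pos)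
  have hdiag : ∀ q ∈ J.diag, ∑ p ∈ P with q.1 % p = q.2 % p, log p = ∑ p ∈ P, log p :=
    fun q hq => by rw [(mem_diag.mp hq).2, filter_true_of_mem fun _ _ => rfl]
  have hoffDiag : ∀ q ∈ J.offDiag, ∑ p ∈ P with q.1 % p = q.2 % p, log p ≤ log x :=
    fun q hq => by
      obtain ⟨h1, h2, hne⟩ := mem_offDiag.mp hq
      exact sum_log_filter_mod_eq_le hP hne (hJ _ h1) (hJ _ h2)
  have hcard : (#J.offDiag : ℝ) = #J ^ 2 - #J := by
    rw [offDiag_card, Nat.cast_sub (Nat.le_mul_self _), Nat.cast_mul, sq]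
  calc ∑ p ∈ P, log p * ∑ c ∈ range p, (#{j ∈ J | j % p = c} : ℝ) ^ 2
      = ∑ q ∈ J ×ˢ J, ∑ p ∈ P with q.1 % p = q.2 % p, log p := by
        rw [sum_congr rfl fun p hp => by rw [hpairs p hp]]
        exact sum_mul_card_filter_eq_sum_sum_filter P _ _ _
    _ = ∑ q ∈ J.diag, ∑ p ∈ P with q.1 % p = q.2 % p, log p
          + ∑ q ∈ J.offDiag, ∑ p ∈ P with q.1 % p = q.2 % p, log p := by
        rw [← diag_union_offDiag, sum_union (disjoint_diag_offDiag J)]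
    _ ≤ #J * ∑ p ∈ P, log p + (#J ^ 2 - #J) * log x := by
        rw [sum_congr rfl hdiag, sum_const, diag_card, nsmul_eq_mul, ← hcard]
        gcongr
        exact (sum_le_card_nsmul _ _ _ hoffDiag).trans_eq (nsmul_eq_mul _ _)

theorem stmt_12 (x : ℕ) (hx : 2 ≤ x) (J : Finset ℕ) (hJ : J ⊆ Finset.Icc 1 x)
    (U : ℝ) (hU0 : 0 < U) (hU : U ≤ J.card) :
    (J.card : ℝ) ^ 2 * Real.log x
        + (J.card : ℝ) * ∑ p ∈ (Finset.range (⌊U⌋₊ + 1)).filter Nat.Prime, Real.log p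
      > ∑ p ∈ (Finset.range (⌊U⌋₊ + 1)).filter Nat.Prime,
          Real.log p * ∑ c ∈ Finset.range p, ((J.filter (fun j => j % p = c)).card : ℝ) ^ 2 := by
  have hbound := sum_log_mul_sum_sq_card_mod_le (P := (range (⌊U⌋₊ + 1)).filter Nat.Prime)
    (fun p hp => (mem_filter.mp hp).2) fun j hj => (mem_Icc.mp (hJ hj)).2
  have hdiag_gain : 0 < (#J : ℝ) * log x :=
    mul_pos (hU0.trans_le hU) (log_pos (by exact_mod_cast hx))
  linarith
end

section
/- Suppose κ1 ≥ 1 is an integer, T ⊆ {1,...,x} is finite with |T| ≥ κ1. Then there exist a set A of nonnegative integers with |A| = κ1 and a set S ⊆ T such that A + S ⊆ T and |S| ≥ C(|T|, κ1) / C(x-1, κ1 - 1), where C(n,k) denotes the binomial coefficient. -/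
/-!
Every `κ₁`-subset `U` of `T` is the translate `D + {min U}` of its difference pattern
`D = U - min U`, a `κ₁`-subset of `{0, …, x - 1}` containing `0`; there are at most
`C(x - 1, κ₁ - 1)` such patterns. By pigeonhole some pattern `D` is the pattern of at least
`C(|T|, κ₁) / C(x - 1, κ₁ - 1)` subsets, and their minima are distinct base points `s ∈ T`
with `D + {s} ⊆ T`.
-/

open Finset Pointwise

section Translates

variable {α : Type*} [DecidableEq α] [Add α]

def translateBases (A T : Finset α) : Finset α := {s ∈ T | A + {s} ⊆ T}

theorem translateBases_subset (A T : Finset α) : translateBases A T ⊆ T := filter_subset _ _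

theorem add_translateBases_subset (A T : Finset α) : A + translateBases A T ⊆ T := by
  refine add_subset_iff.2 fun a ha s hs => ?_
  exact (mem_filter.1 hs).2 (add_mem_add ha (mem_singleton_self s))

theorem exists_card_le_card_mul_card_translateBases {P 𝒟 : Finset (Finset α)} {T : Finset α}
    (hP : P.Nonempty)
    (hcover : ∀ U ∈ P, ∃ D ∈ 𝒟, ∃ s ∈ translateBases D T, D + {s} = U) :
    ∃ D ∈ 𝒟, #P ≤ #𝒟 * #(translateBases D T) := by
  have h𝒟 : 𝒟.Nonempty := by
    obtain ⟨U, hU⟩ := hP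
    obtain ⟨D, hD, -⟩ := hcover U hU
    exact ⟨D, hD⟩
  obtain ⟨D, hD, hmax⟩ := 𝒟.exists_max_image (fun D => #(translateBases D T)) h𝒟
  have hPsub : P ⊆ 𝒟.biUnion fun D => (translateBases D T).image (D + {·}) := by
    intro U hU
    obtain ⟨D, hD, s, hs, rfl⟩ := hcover U hU
    exact mem_biUnion.2 ⟨D, hD, mem_image_of_mem _ hs⟩
  refine ⟨D, hD, ?_⟩
  calc #P ≤ #(𝒟.biUnion fun D => (translateBases D T).image (D + {·})) := card_le_card hPsub
    _ ≤ ∑ D ∈ 𝒟, #((translateBases D T).image (D + {·})) := card_biUnion_le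
    _ ≤ ∑ D ∈ 𝒟, #(translateBases D T) := sum_le_sum fun _ _ => card_image_le
    _ ≤ #𝒟 * #(translateBases D T) := by simpa using sum_le_card_nsmul _ _ _ hmax

end Translates

def differencePatterns (k n : ℕ) : Finset (Finset ℕ) :=
  {D ∈ (range n).powersetCard k | 0 ∈ D}

theorem card_differencePatterns_le (k n : ℕ) :
    #(differencePatterns k n) ≤ (n - 1).choose (k - 1) := by
  calc #(differencePatterns k n) ≤ #((Ioo 0 n).powersetCard (k - 1)) := by
        refine card_le_card_of_injOn (·.erase 0) (fun D hD => ?_) fun D hD E hE hDE => ?_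
        · obtain ⟨hDnk, h0⟩ := mem_filter.1 (mem_coe.1 hD)
          obtain ⟨hDn, hDk⟩ := mem_powersetCard.1 hDnk
          refine mem_powersetCard.2 ⟨fun a ha => ?_, by rw [card_erase_of_mem h0, hDk]⟩
          obtain ⟨ha0, haD⟩ := mem_erase.1 ha
          simpa [Nat.pos_iff_ne_zero, ha0] using hDn haD
        · have := congrArg (insert 0) hDE
          simp only at this
          rwa [insert_erase (mem_filter.1 hD).2, insert_erase (mem_filter.1 hE).2] at this
    _ = (n - 1).choose (k - 1) := by rw [card_powersetCard, Nat.card_Ioo, Nat.sub_zero]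

theorem image_sub_min'_add_singleton {U : Finset ℕ} (hU : U.Nonempty) :
    U.image (· - U.min' hU) + {U.min' hU} = U := by
  ext u
  simp only [mem_add, mem_image, mem_singleton, exists_exists_and_eq_and, exists_eq_left]
  constructor
  · rintro ⟨v, hv, rfl⟩
    rwa [Nat.sub_add_cancel (U.min'_le v hv)]
  · exact fun hu => ⟨u, hu, Nat.sub_add_cancel (U.min'_le u hu)⟩

theorem image_sub_min'_mem_differencePatterns {U : Finset ℕ} {x : ℕ} (hU : U.Nonempty)
    (hUx : U ⊆ Icc 1 x) : U.image (· - U.min' hU) ∈ differencePatterns #U x := by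
  have hinj : Set.InjOn (· - U.min' hU) U := fun u hu v hv huv => by
    have := U.min'_le u hu
    have := U.min'_le v hv
    simp only at huv
    omega
  refine mem_filter.2 ⟨mem_powersetCard.2 ⟨fun a ha => ?_, card_image_of_injOn hinj⟩,
    mem_image.2 ⟨_, U.min'_mem hU, Nat.sub_self _⟩⟩
  obtain ⟨u, hu, rfl⟩ := mem_image.1 ha
  have := mem_Icc.1 (hUx hu)
  have := mem_Icc.1 (hUx (U.min'_mem hU))
  simp only [mem_range]
  omega

theorem card_of_mem_differencePatterns {D : Finset ℕ} {k n : ℕ}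
    (hD : D ∈ differencePatterns k n) : #D = k :=
  (mem_powersetCard.1 (mem_filter.1 hD).1).2

theorem exists_differencePattern_add_singleton_eq {U T : Finset ℕ} {x : ℕ} (hU : U.Nonempty)
    (hUT : U ⊆ T) (hT : T ⊆ Icc 1 x) :
    ∃ D ∈ differencePatterns #U x, ∃ s ∈ translateBases D T, D + {s} = U := by
  refine ⟨_, image_sub_min'_mem_differencePatterns hU (hUT.trans hT), U.min' hU,
    mem_filter.2 ⟨hUT (U.min'_mem hU), ?_⟩, image_sub_min'_add_singleton hU⟩
  rw [image_sub_min'_add_singleton hU]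
  exact hUT

theorem stmt_13_general (κ₁ x : ℕ) (hκ : 1 ≤ κ₁) (T : Finset ℕ) (hT : T ⊆ Finset.Icc 1 x) :
    ∃ (A S : Finset ℕ), A.card = κ₁ ∧ S ⊆ T ∧ A + S ⊆ T ∧
      ((T.card.choose κ₁ : ℝ) / ((x - 1).choose (κ₁ - 1) : ℝ) ≤ S.card) := by
  rcases (T.powersetCard κ₁).eq_empty_or_nonempty with hP | hP
  · refine ⟨range κ₁, ∅, card_range κ₁, empty_subset T, by simp, ?_⟩
    rw [← card_powersetCard, hP]
    simp
  have hcover : ∀ U ∈ T.powersetCard κ₁, ∃ D ∈ differencePatterns κ₁ x,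
      ∃ s ∈ translateBases D T, D + {s} = U := by
    intro U hU
    obtain ⟨hUT, rfl⟩ := mem_powersetCard.1 hU
    exact exists_differencePattern_add_singleton_eq (card_pos.1 (by omega)) hUT hT
  obtain ⟨D, hD, hcard⟩ := exists_card_le_card_mul_card_translateBases hP hcover
  have hbound : #(T.powersetCard κ₁) ≤ #(translateBases D T) * (x - 1).choose (κ₁ - 1) :=
    calc #(T.powersetCard κ₁) ≤ #(differencePatterns κ₁ x) * #(translateBases D T) := hcard
      _ ≤ (x - 1).choose (κ₁ - 1) * #(translateBases D T) :=
        Nat.mul_le_mul_right _ (card_differencePatterns_le κ₁ x)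
      _ = #(translateBases D T) * (x - 1).choose (κ₁ - 1) := Nat.mul_comm _ _
  refine ⟨D, translateBases D T, card_of_mem_differencePatterns hD, translateBases_subset D T,
    add_translateBases_subset D T, div_le_of_le_mul₀ (by positivity) (by positivity) ?_⟩
  rw [← card_powersetCard]
  exact_mod_cast hbound

theorem stmt_13 (κ₁ x : ℕ) (hκ : 1 ≤ κ₁) (T : Finset ℕ) (hT : T ⊆ Finset.Icc 1 x)
    (hTcard : κ₁ ≤ T.card) :
    ∃ (A S : Finset ℕ), A.card = κ₁ ∧ S ⊆ T ∧ A + S ⊆ T ∧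
      ((T.card.choose κ₁ : ℝ) / ((x - 1).choose (κ₁ - 1) : ℝ) ≤ S.card) :=
  stmt_13_general κ₁ x hκ T hT
end
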